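/- Fix m ≥ 2 mean times between false alarms 1 ≤ τ_1 < ⋯ < τ_m, c_F > 0, and attacker types φ = 1,…,n_φ with priors π_φ ≥ 0 summing to 1, where for each type φ the payoffs satisfy either 0 < I_1^φ < I_2^φ < ⋯ < I_m^φ or I_j^φ = 0 for all j. Suppose the boundary condition c_F/τ_{m−1} = c_F/τ_m + Σ_{φ=1}^{n_φ} π_φ I_m^φ holds, and let p_m ∈ [0,1) satisfy I_{m−1}^φ ≤ p_m · I_m^φ for every type φ. Then the defender strategy p* with p*_{m−1} = 1 − p_m, p*_m = p_m, and p*_ν = 0 for ν < m−1, together with the attacker strategies q*_φ = e_m (the pure strategy on the m-th column) for every φ, forms a Bayesian Nash equilibrium, and p* is a moving target defense. -/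
import Mathlib


open Matrix BigOperators

/-- A (mixed strategy) probability vector: nonnegative entries summing to one. -/
def IsProbVec {m : ℕ} (p : Fin m → ℝ) : Prop := (∀ i, 0 ≤ p i) ∧ ∑ i, p i = 1

/-- Defender cost matrix `Ω(φ)_{i,j} = c_F/τ_i + 1{j ≤ i}·I_j^φ`. -/
noncomputable def OmegaMat {m nφ : ℕ} (τ : Fin m → ℝ) (cF : ℝ) (I : Fin nφ → Fin m → ℝ)
    (φ : Fin nφ) : Matrix (Fin m) (Fin m) ℝ :=
  Matrix.of fun i j => cF / τ i + if j ≤ i then I φ j else 0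

/-- Attacker payoff matrix `Υ(φ)_{i,j} = 1{j ≤ i}·I_j^φ`. -/
noncomputable def UpsilonMat {m nφ : ℕ} (I : Fin nφ → Fin m → ℝ) (φ : Fin nφ) :
    Matrix (Fin m) (Fin m) ℝ :=
  Matrix.of fun i j => if j ≤ i then I φ j else 0

/-- Bayesian Nash equilibrium of the threshold-switching game: `p` minimizes the
prior-averaged defender cost against `(q_φ)` and each `q_φ` maximizes the payoff of
attacker type `φ` against `p`. -/
noncomputable def IsBNE {m nφ : ℕ} (τ : Fin m → ℝ) (cF : ℝ) (I : Fin nφ → Fin m → ℝ)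
    (π : Fin nφ → ℝ) (p : Fin m → ℝ) (q : Fin nφ → Fin m → ℝ) : Prop :=
  IsProbVec p ∧ (∀ φ, IsProbVec (q φ)) ∧
  (∀ p' : Fin m → ℝ, IsProbVec p' →
    ∑ φ, π φ * (p ⬝ᵥ (OmegaMat τ cF I φ *ᵥ q φ)) ≤
      ∑ φ, π φ * (p' ⬝ᵥ (OmegaMat τ cF I φ *ᵥ q φ))) ∧
  (∀ φ, ∀ q' : Fin m → ℝ, IsProbVec q' →
    p ⬝ᵥ (UpsilonMat I φ *ᵥ q') ≤ p ⬝ᵥ (UpsilonMat I φ *ᵥ q φ))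

section Aux

private lemma two_point_sum {m : ℕ} {a b : Fin m} (hab : a ≠ b) (x y : ℝ)
    (g : Fin m → ℝ) :
    ∑ i, (if i = b then x else if i = a then y else 0) * g i = x * g b + y * g a := by
  have h : ∀ i : Fin m, (if i = b then x else if i = a then y else 0) * g i
      = (if i = b then x * g b else 0) + (if i = a then y * g a else 0) := by
    intro i
    by_cases h1 : i = b
    · subst h1; simp [Ne.symm hab]
    · by_cases h2 : i = a
      · subst h2; simp [h1]
      · simp [h1, h2]
  simp_rw [h, Finset.sum_add_distrib]
  simp

private theorem aux_bne {m nφ : ℕ} (τ : Fin m → ℝ) (cF : ℝ) (I : Fin nφ → Fin m → ℝ)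
    (π : Fin nφ → ℝ) (a b : Fin m)
    (hab : a ≠ b) (hbtop : ∀ i, i ≤ b) (hale : ∀ i, i ≠ b → i ≤ a)
    (hτpos : ∀ i, 0 < τ i) (hτm : Monotone τ) (hcF : 0 ≤ cF)
    (hπ0 : ∀ φ, 0 ≤ π φ) (hπ1 : ∑ φ, π φ = 1)
    (hImono : ∀ φ, Monotone (I φ)) (hI0 : ∀ φ j, 0 ≤ I φ j)
    (hboundary : cF / τ a = cF / τ b + ∑ φ, π φ * I φ b)
    (pm : ℝ) (hpm0 : 0 ≤ pm) (hpm1 : pm ≤ 1)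
    (hpmI : ∀ φ, I φ a ≤ pm * I φ b) :
    IsBNE τ cF I π (fun ν => if ν = b then pm else if ν = a then 1 - pm else 0)
      (fun _ => Pi.single b 1) := by
  have hba : ¬ b ≤ a := fun h => hab (le_antisymm (hbtop a) h)
  have hdot : ∀ (M : Matrix (Fin m) (Fin m) ℝ) (u v : Fin m → ℝ),
      u ⬝ᵥ (M *ᵥ v) = ∑ i, u i * (∑ j, M i j * v j) := fun _ _ _ => rfl
  have hsingle : ∀ (M : Matrix (Fin m) (Fin m) ℝ) (i : Fin m),
      (∑ j, M i j * (Pi.single b 1 : Fin m → ℝ) j) = M i b := by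
    intro M i
    simp [Pi.single_apply, mul_ite]
  set S : ℝ := ∑ φ, π φ * I φ b with hS
  have hS0 : 0 ≤ S := Finset.sum_nonneg fun φ _ => mul_nonneg (hπ0 φ) (hI0 φ b)
  set C : ℝ := cF / τ a with hC
  set F : Fin m → ℝ := fun i => cF / τ i + if i = b then S else 0 with hF
  have hble : ∀ i : Fin m, (b ≤ i) ↔ i = b :=
    fun i => ⟨fun h => le_antisymm (hbtop i) h, fun h => h ▸ le_refl b⟩
  have hFb' : F b = cF / τ b + S := by simp [hF]
  have hFlb : ∀ i, C ≤ F i := by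
    intro i
    by_cases h : i = b
    · subst h
      rw [hFb']
      exact le_of_eq hboundary
    · have hFi : F i = cF / τ i := by simp [hF, h]
      rw [hFi, hC]
      exact div_le_div_of_nonneg_left hcF (hτpos i) (hτm (hale i h))
  have hFa : F a = C := by simp [hF, hC, hab]
  have hFb : F b = C := by
    rw [hFb']
    exact hboundary.symm
  refine ⟨?_, ?_, ?_, ?_⟩
  · constructor
    · intro i
      show 0 ≤ (if i = b then pm else if i = a then 1 - pm else 0)
      by_cases h1 : i = b
      · rw [if_pos h1]; exact hpm0
      · rw [if_neg h1]
        by_cases h2 : i = a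
        · rw [if_pos h2]; linarith
        · rw [if_neg h2]
    · have := two_point_sum hab pm (1 - pm) (fun _ => (1 : ℝ))
      simpa using this
  · intro φ
    constructor
    · intro i
      show (0:ℝ) ≤ (Pi.single b 1 : Fin m → ℝ) i
      rw [Pi.single_apply]
      by_cases h : i = b
      · rw [if_pos h]; norm_num
      · rw [if_neg h]
    · show ∑ i, (Pi.single b 1 : Fin m → ℝ) i = 1
      simp [Pi.single_apply]
  · -- defender optimality
    intro p' hp'
    have key : ∀ u : Fin m → ℝ,
        ∑ φ, π φ * (u ⬝ᵥ (OmegaMat τ cF I φ *ᵥ Pi.single b 1)) = ∑ i, u i * F i := by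
      intro u
      have h1 : ∀ φ, u ⬝ᵥ (OmegaMat τ cF I φ *ᵥ Pi.single b 1)
          = ∑ i, u i * (cF / τ i + if i = b then I φ b else 0) := by
        intro φ
        rw [hdot]
        refine Finset.sum_congr rfl fun i _ => ?_
        rw [hsingle]
        simp only [OmegaMat, Matrix.of_apply, hble i]
      simp_rw [h1, Finset.mul_sum]
      rw [Finset.sum_comm]
      refine Finset.sum_congr rfl fun i _ => ?_
      by_cases h : i = b
      · subst h
        simp only [hF, eq_self_iff_true, if_true]
        have he : ∀ φ, π φ * (u i * (cF / τ i + I φ i))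
            = u i * (cF / τ i) * π φ + u i * (π φ * I φ i) := by intro φ; ring
        simp_rw [he, Finset.sum_add_distrib, ← Finset.mul_sum, hπ1, ← hS]
        ring
      · simp only [if_neg h, add_zero, hF]
        have he : ∀ φ, π φ * (u i * (cF / τ i)) = u i * (cF / τ i) * π φ := by intro φ; ring
        simp_rw [he, ← Finset.mul_sum, hπ1, mul_one]
    rw [key, key]
    have hlhs : ∑ i, (if i = b then pm else if i = a then 1 - pm else 0) * F i = C := by
      rw [two_point_sum hab, hFa, hFb]; ring
    calc ∑ i, (fun ν => if ν = b then pm else if ν = a then 1 - pm else 0) i * F i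
        = C := hlhs
      _ = ∑ i, p' i * C := by rw [← Finset.sum_mul, hp'.2, one_mul]
      _ ≤ ∑ i, p' i * F i :=
          Finset.sum_le_sum fun i _ => mul_le_mul_of_nonneg_left (hFlb i) (hp'.1 i)
  · -- attacker optimality
    intro φ q' hq'
    rw [hdot, hdot]
    have hΥ : ∀ i j, UpsilonMat I φ i j = if j ≤ i then I φ j else 0 := fun _ _ => rfl
    have hcoef : ∀ j : Fin m,
        pm * I φ j + (1 - pm) * (if j ≤ a then I φ j else 0) ≤ pm * I φ b := by
      intro j
      by_cases hj : j ≤ a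
      · rw [if_pos hj]
        have h1 : I φ j ≤ I φ a := hImono φ hj
        have h2 := hpmI φ
        have h3 : pm * I φ j + (1 - pm) * I φ j = I φ j := by ring
        linarith
      · have hjb : j = b := by
          by_contra h
          exact hj (hale j h)
        subst hjb
        rw [if_neg hj]
        linarith
    calc ∑ i, (fun ν => if ν = b then pm else if ν = a then 1 - pm else 0) i *
            (∑ j, UpsilonMat I φ i j * q' j)
        = pm * (∑ j, UpsilonMat I φ b j * q' j)
            + (1 - pm) * (∑ j, UpsilonMat I φ a j * q' j) :=
          two_point_sum hab pm (1 - pm) _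
      _ = ∑ j, q' j * (pm * I φ j + (1 - pm) * (if j ≤ a then I φ j else 0)) := by
          rw [Finset.mul_sum, Finset.mul_sum, ← Finset.sum_add_distrib]
          refine Finset.sum_congr rfl fun j _ => ?_
          rw [hΥ, hΥ, if_pos (hbtop j)]
          ring
      _ ≤ ∑ j, q' j * (pm * I φ b) :=
          Finset.sum_le_sum fun j _ => mul_le_mul_of_nonneg_left (hcoef j) (hq'.1 j)
      _ = pm * I φ b := by rw [← Finset.sum_mul, hq'.2, one_mul]
      _ = ∑ i, (fun ν => if ν = b then pm else if ν = a then 1 - pm else 0) i *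
            (∑ j, UpsilonMat I φ i j * (Pi.single b 1 : Fin m → ℝ) j) := by
          rw [two_point_sum hab pm (1 - pm) _]
          rw [hsingle, hsingle, hΥ, hΥ, if_pos (le_refl b), if_neg hba]
          ring

end Aux

/-- Equality case of Theorem 1: on the boundary `c_F/τ_{m-1} = c_F/τ_m + Σ_φ π_φ I_m^φ`, for
any `p_m ∈ [0,1)` with `I_{m-1}^φ ≤ p_m·I_m^φ` for every type, the defender strategy putting
mass `1 - p_m` on `τ_{m-1}` and `p_m` on `τ_m`, together with every attacker type playing the
pure strategy on the `m`-th column, is a Bayesian Nash equilibrium and a moving target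
defense. -/
theorem boundary_mtd (m nφ : ℕ) (hm : 2 ≤ m)
    (τ : Fin m → ℝ) (hτmono : StrictMono τ) (hτ1 : 1 ≤ τ ⟨0, by omega⟩)
    (cF : ℝ) (hcF : 0 < cF)
    (π : Fin nφ → ℝ) (hπ0 : ∀ φ, 0 ≤ π φ) (hπ1 : ∑ φ, π φ = 1)
    (I : Fin nφ → Fin m → ℝ)
    (hI : ∀ φ, (0 < I φ ⟨0, by omega⟩ ∧ StrictMono (I φ)) ∨ (∀ j, I φ j = 0))
    (hboundary : cF / τ ⟨m - 2, by omega⟩ =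
      cF / τ ⟨m - 1, by omega⟩ + ∑ φ, π φ * I φ ⟨m - 1, by omega⟩)
    (pm : ℝ) (hpm0 : 0 ≤ pm) (hpm1 : pm < 1)
    (hpmI : ∀ φ, I φ ⟨m - 2, by omega⟩ ≤ pm * I φ ⟨m - 1, by omega⟩) :
    IsBNE τ cF I π
      (fun ν => if (ν : ℕ) = m - 1 then pm else if (ν : ℕ) = m - 2 then 1 - pm else 0)
      (fun _ => Pi.single ⟨m - 1, by omega⟩ 1) ∧
    ∀ i : Fin m,
      (if (i : ℕ) = m - 1 then pm else if (i : ℕ) = m - 2 then 1 - pm else 0) < 1 := by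
  have hm2 : m - 2 < m := by omega
  have hm1 : m - 1 < m := by omega
  have h0m : 0 < m := by omega
  set a : Fin m := ⟨m - 2, hm2⟩ with hadef
  set b : Fin m := ⟨m - 1, hm1⟩ with hbdef
  set z : Fin m := ⟨0, h0m⟩ with hzdef
  have hav : (a : ℕ) = m - 2 := rfl
  have hbv : (b : ℕ) = m - 1 := rfl
  have hab : a ≠ b := by
    intro h
    have h2 : m - 2 = m - 1 := by rw [← hav, ← hbv, h]
    omega
  have hbtop : ∀ i : Fin m, i ≤ b := by
    intro i
    rw [Fin.le_def, hbv]
    omega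
  have hale : ∀ i : Fin m, i ≠ b → i ≤ a := by
    intro i hi
    have hv : (i : ℕ) ≠ m - 1 := fun h => hi (Fin.ext h)
    rw [Fin.le_def, hav]
    omega
  have hzle : ∀ i : Fin m, z ≤ i := by
    intro i
    rw [Fin.le_def]
    exact Nat.zero_le _
  have hτpos : ∀ i, 0 < τ i := by
    intro i
    have h1 : τ z ≤ τ i := hτmono.monotone (hzle i)
    have h2 : (1 : ℝ) ≤ τ z := hτ1
    linarith
  have hImono : ∀ φ, Monotone (I φ) := by
    intro φ
    rcases hI φ with ⟨_, hsm⟩ | hz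
    · exact hsm.monotone
    · intro x y _; simp [hz]
  have hI0 : ∀ φ j, 0 ≤ I φ j := by
    intro φ j
    rcases hI φ with ⟨hpos, hsm⟩ | hz
    · have : I φ z ≤ I φ j := hsm.monotone (hzle j)
      have h2 : 0 < I φ z := hpos
      linarith
    · rw [hz j]
  have hboundary' : cF / τ a = cF / τ b + ∑ φ, π φ * I φ b := hboundary
  have hpmI' : ∀ φ, I φ a ≤ pm * I φ b := hpmI
  have hbne := aux_bne τ cF I π a b hab hbtop hale hτpos hτmono.monotone hcF.le
    hπ0 hπ1 hImono hI0 hboundary' pm hpm0 hpm1.le hpmI'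
  have hpe : (fun ν : Fin m => if (ν : ℕ) = m - 1 then pm else
      if (ν : ℕ) = m - 2 then 1 - pm else 0)
      = fun ν => if ν = b then pm else if ν = a then 1 - pm else 0 := by
    funext ν
    by_cases h1 : ν = b
    · have hv : (ν : ℕ) = m - 1 := by rw [h1]
      rw [if_pos hv, if_pos h1]
    · have hv : ¬ (ν : ℕ) = m - 1 := fun h => h1 (Fin.ext h)
      rw [if_neg hv, if_neg h1]
      by_cases h2 : ν = a
      · have hv2 : (ν : ℕ) = m - 2 := by rw [h2]
        rw [if_pos hv2, if_pos h2]
      · have hv2 : ¬ (ν : ℕ) = m - 2 := fun h => h2 (Fin.ext h)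
        rw [if_neg hv2, if_neg h2]
  -- positivity of pm
  have hτab : τ a < τ b := by
    apply hτmono
    rw [Fin.lt_def, hav, hbv]
    omega
  have hSpos : 0 < ∑ φ, π φ * I φ b := by
    have h2 : cF / τ b < cF / τ a := div_lt_div_of_pos_left hcF (hτpos a) hτab
    linarith [hboundary']
  have hpm_pos : 0 < pm := by
    have hφ : ∃ φ, 0 < π φ * I φ b := by
      by_contra h
      push_neg at h
      have : ∑ φ, π φ * I φ b ≤ 0 := Finset.sum_nonpos fun φ _ => h φ
      linarith
    obtain ⟨φ, hφ⟩ := hφ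
    have hIb : 0 < I φ b := by
      rcases lt_or_ge 0 (I φ b) with h | h
      · exact h
      · have : π φ * I φ b ≤ 0 := mul_nonpos_of_nonneg_of_nonpos (hπ0 φ) h
        linarith
    have hIa : 0 < I φ a := by
      rcases hI φ with ⟨hpos, hsm⟩ | hz
      · have : I φ z ≤ I φ a := hsm.monotone (hzle a)
        have h2 : 0 < I φ z := hpos
        linarith
      · exfalso; rw [hz b] at hIb; exact lt_irrefl 0 hIb
    have h3 := hpmI' φ
    by_contra h
    push_neg at h
    have : pm * I φ b ≤ 0 := mul_nonpos_of_nonpos_of_nonneg h hIb.le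
    linarith
  constructor
  · rw [hpe]
    exact hbne
  · intro i
    by_cases h1 : (i : ℕ) = m - 1
    · rw [if_pos h1]; exact hpm1
    · rw [if_neg h1]
      by_cases h2 : (i : ℕ) = m - 2
      · rw [if_pos h2]; linarith
      · rw [if_neg h2]; norm_num
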